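/- arXiv:1506.02500 — 2 statements merged into one kernel-verified Lean document; each statement's English description precedes it below -/
import Mathlib

section
/- Let 1 < p ≤ q < ∞, 0 < β < 1, and let (u,v) ∈ A_{p,q}^β with σ = v^{-1/(p-1)} ∈ A_∞^β. Then there exist exponents p̃ < p and q̃ < q, with 1 < p̃ ≤ q̃, such that (u,v) ∈ A_{p̃,q̃}^β; moreover one may take p̃ = p − δ for suitable δ > 0 and q̃ = ((p−δ)/p)·q, so that p/q = p̃/q̃. -/
open MeasureTheory Metric Set
open scoped ENNReal

noncomputable section

/-- The cube `Q(x,l)` with center `x` and half side length `l`, i.e. the closed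
ball of radius `l` in the sup metric `d_∞` on `Fin n → ℝ`. -/
def Cube {n : ℕ} (x : Fin n → ℝ) (l : ℝ) : Set (Fin n → ℝ) :=
  Metric.closedBall x l

/-- `Q(x,l)` belongs to the family `F_β` of cubes well inside `Ω`. -/
def MemF {n : ℕ} (Ω : Set (Fin n → ℝ)) (β : ℝ) (x : Fin n → ℝ) (l : ℝ) : Prop :=
  x ∈ Ω ∧ 0 < l ∧ l < β * Metric.infDist x Ωᶜ

/-- `w(E) = ∫_E w dx` for a weight `w`. -/
def wMeas {n : ℕ} (w : (Fin n → ℝ) → ℝ) (E : Set (Fin n → ℝ)) : ℝ≥0∞ :=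
  ∫⁻ y in E, ENNReal.ofReal (w y)

/-- The average `|Q|⁻¹ ∫_Q |f|`. -/
def avgI {n : ℕ} (f : (Fin n → ℝ) → ℝ) (Q : Set (Fin n → ℝ)) : ℝ≥0∞ :=
  (volume Q)⁻¹ * ∫⁻ y in Q, ENNReal.ofReal |f y|

/-- The local (uncentered) maximal function `M_β f`. -/
def locMax {n : ℕ} (Ω : Set (Fin n → ℝ)) (β : ℝ) (f : (Fin n → ℝ) → ℝ)
    (x : Fin n → ℝ) : ℝ≥0∞ :=
  ⨆ (c : Fin n → ℝ) (l : ℝ) (_ : MemF Ω β c l) (_ : x ∈ Cube c l), avgI f (Cube c l)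

/-- The centered local maximal function `M_β^c f`. -/
def locMaxC {n : ℕ} (Ω : Set (Fin n → ℝ)) (β : ℝ) (f : (Fin n → ℝ) → ℝ)
    (x : Fin n → ℝ) : ℝ≥0∞ :=
  ⨆ (l : ℝ) (_ : MemF Ω β x l), avgI f (Cube x l)

/-- A weight: a nonnegative (measurable) locally integrable function on `Ω`. -/
def IsWeight {n : ℕ} (Ω : Set (Fin n → ℝ)) (w : (Fin n → ℝ) → ℝ) : Prop :=
  (∀ x, 0 ≤ w x) ∧ Measurable w ∧ LocallyIntegrableOn w Ω

/-- `σ = v^{1-p'} = v^{-1/(p-1)}`. -/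
def sigW {n : ℕ} (v : (Fin n → ℝ) → ℝ) (p : ℝ) : (Fin n → ℝ) → ℝ :=
  fun y => v y ^ (-(1 / (p - 1)))

/-- The class `A_{p,q}^β`: `(u(Q)/|Q|)^{p/q} (σ(Q)/|Q|)^{p-1} ≤ C` for `Q ∈ F_β`. -/
def Apq {n : ℕ} (Ω : Set (Fin n → ℝ)) (β p q : ℝ) (u v : (Fin n → ℝ) → ℝ) : Prop :=
  ∃ C : ℝ≥0∞, C ≠ ⊤ ∧ ∀ x l, MemF Ω β x l →
    (wMeas u (Cube x l) / volume (Cube x l)) ^ (p / q) *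
      (wMeas (sigW v p) (Cube x l) / volume (Cube x l)) ^ (p - 1) ≤ C

/-- The class `D_β`: `w(2Q) ≤ C w(Q) < ∞` for all `Q ∈ F_β` with `2Q ∈ F_β`. -/
def Dbeta {n : ℕ} (Ω : Set (Fin n → ℝ)) (β : ℝ) (w : (Fin n → ℝ) → ℝ) : Prop :=
  ∃ C : ℝ≥0∞, C ≠ ⊤ ∧ ∀ x l, MemF Ω β x l → MemF Ω β x (2 * l) →
    wMeas w (Cube x (2 * l)) ≤ C * wMeas w (Cube x l) ∧ wMeas w (Cube x l) < ⊤

/-- The class `A_∞^β`: `w(E)/w(Q) ≤ c (|E|/|Q|)^δ` for measurable `E ⊆ Q ∈ F_β`. -/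
def AinfB {n : ℕ} (Ω : Set (Fin n → ℝ)) (β : ℝ) (w : (Fin n → ℝ) → ℝ) : Prop :=
  ∃ c δ : ℝ, 0 < c ∧ 0 < δ ∧ ∀ x l, MemF Ω β x l → ∀ E : Set (Fin n → ℝ),
    MeasurableSet E → E ⊆ Cube x l →
    wMeas w E ≤ ENNReal.ofReal c * (volume E / volume (Cube x l)) ^ δ * wMeas w (Cube x l)

/-- `M_β : L^p(v) → L^q(u)` is bounded. -/
def MaxBdd {n : ℕ} (Ω : Set (Fin n → ℝ)) (β p q : ℝ) (u v : (Fin n → ℝ) → ℝ) : Prop :=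
  ∃ C : ℝ≥0∞, C ≠ ⊤ ∧ ∀ f : (Fin n → ℝ) → ℝ,
    (∫⁻ x in Ω, (locMax Ω β f x) ^ q * ENNReal.ofReal (u x)) ^ (1 / q)
      ≤ C * (∫⁻ x in Ω, ENNReal.ofReal |f x| ^ p * ENNReal.ofReal (v x)) ^ (1 / p)

/-- `M_β^c : L^p(v) → L^q(u)` is bounded. -/
def MaxCBdd {n : ℕ} (Ω : Set (Fin n → ℝ)) (β p q : ℝ) (u v : (Fin n → ℝ) → ℝ) : Prop :=
  ∃ C : ℝ≥0∞, C ≠ ⊤ ∧ ∀ f : (Fin n → ℝ) → ℝ,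
    (∫⁻ x in Ω, (locMaxC Ω β f x) ^ q * ENNReal.ofReal (u x)) ^ (1 / q)
      ≤ C * (∫⁻ x in Ω, ENNReal.ofReal |f x| ^ p * ENNReal.ofReal (v x)) ^ (1 / p)

/-- The cloud `N_β(Q)` of the cube `Q = Q(x,l)`. -/
def cloud {n : ℕ} (Ω : Set (Fin n → ℝ)) (β : ℝ) (x : Fin n → ℝ) (l : ℝ) :
    Set (Fin n → ℝ) :=
  ⋃ (c : Fin n → ℝ) (r : ℝ) (_ : MemF Ω β c r)
    (_ : (Cube c r ∩ Cube x l).Nonempty), Cube c r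

/-- The center of the usual dyadic cube of side `2^(k+1)` indexed by `z`. -/
def dyCenter {n : ℕ} (k : ℤ) (z : Fin n → ℤ) : Fin n → ℝ :=
  fun i => (2 * (z i : ℝ) + 1) * (2:ℝ) ^ k

/-- The usual (half-open) dyadic cube of side `2^(k+1)` indexed by `z`;
its center is `dyCenter k z` and its half side length is `2^k`. -/
def dyCube {n : ℕ} (k : ℤ) (z : Fin n → ℤ) : Set (Fin n → ℝ) :=
  Set.univ.pi fun i => Ico ((z i : ℝ) * 2 ^ (k + 1)) (((z i : ℝ) + 1) * 2 ^ (k + 1))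

/-- `Q(x,l)` is a usual dyadic cube of `ℝ^n`. -/
def IsDyadic {n : ℕ} (x : Fin n → ℝ) (l : ℝ) : Prop :=
  ∃ (k : ℤ) (z : Fin n → ℤ), l = (2:ℝ) ^ k ∧ x = dyCenter k z

/-- `W` is a covering `W_t` of `Ω` as in the covering lemma: a covering of `Ω`
by pairwise disjoint dyadic cubes `R ∈ F_β` with `10R ∈ F_β` and
`2^{-t-3} d(x_R,Ω^c) ≤ l_R ≤ 2^{-t-1} d(x_R,Ω^c)`, and such that at most `M`
cubes of `W` meet the cloud of any `Q ∈ F_β` with `10Q ∉ F_β`. -/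
def IsWt {n : ℕ} (Ω : Set (Fin n → ℝ)) (β : ℝ) (t : ℕ)
    (W : Set (ℤ × (Fin n → ℤ))) : Prop :=
  (Ω ⊆ ⋃ q ∈ W, dyCube q.1 q.2) ∧
  (W.PairwiseDisjoint fun q => dyCube q.1 q.2) ∧
  (∀ q ∈ W, MemF Ω β (dyCenter q.1 q.2) ((2:ℝ) ^ q.1) ∧
    MemF Ω β (dyCenter q.1 q.2) (10 * (2:ℝ) ^ q.1) ∧
    (2:ℝ) ^ (-(t:ℤ) - 3) * Metric.infDist (dyCenter q.1 q.2) Ωᶜ ≤ (2:ℝ) ^ q.1 ∧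
    (2:ℝ) ^ q.1 ≤ (2:ℝ) ^ (-(t:ℤ) - 1) * Metric.infDist (dyCenter q.1 q.2) Ωᶜ) ∧
  (∃ M : ℕ, ∀ x l, MemF Ω β x l → ¬ MemF Ω β x (10 * l) →
    {q ∈ W | (dyCube q.1 q.2 ∩ cloud Ω β x l).Nonempty}.Finite ∧
    {q ∈ W | (dyCube q.1 q.2 ∩ cloud Ω β x l).Nonempty}.ncard ≤ M)

/-- `W_{t,Q}`: the union of the cubes of `W` meeting the cloud of `Q = Q(x,l)`. -/
def WtQ {n : ℕ} (Ω : Set (Fin n → ℝ)) (β : ℝ) (W : Set (ℤ × (Fin n → ℤ)))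
    (x : Fin n → ℝ) (l : ℝ) : Set (Fin n → ℝ) :=
  ⋃ q ∈ {q ∈ W | (dyCube q.1 q.2 ∩ cloud Ω β x l).Nonempty}, dyCube q.1 q.2

/-! Chebyshev's inequality turns the `A_∞` condition on `σ` into the tail bound
`σ({σ > t} ∩ Q) ≲ (σ(Q)/|Q|)^δ σ(Q) t^{-δ}`, and the layer-cake formula then bounds
`∫_Q σ^{1+ε} = ∫_Q σ^ε dσ` for `ε < δ`: this is the reverse Hölder inequality
`⨍_Q σ^{1+ε} ≤ K (⨍_Q σ)^{1+ε}` on the cubes of `F_β`. If `(p̃ - 1)(1 + ε) = p - 1`, then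
`σ_{p̃} = σ^{1+ε}`, so with `p̃/q̃ = p/q` the `A_{p̃,q̃}` expression of a cube is at most
`K^{p̃-1}` times its `A_{p,q}` expression. -/

lemma lintegral_Ioc_zero_rpow {r a : ℝ} (hr : -1 < r) (ha : 0 ≤ a) :
    ∫⁻ t in Ioc 0 a, ENNReal.ofReal (t ^ r) = ENNReal.ofReal (a ^ (r + 1) / (r + 1)) := by
  have hint : IntegrableOn (fun t : ℝ => t ^ r) (Ioc 0 a) :=
    (intervalIntegrable_iff_integrableOn_Ioc_of_le ha).1
      (intervalIntegral.intervalIntegrable_rpow' hr)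
  rw [← ofReal_integral_eq_lintegral_ofReal hint
      (ae_restrict_of_forall_mem measurableSet_Ioc fun t ht => Real.rpow_nonneg ht.1.le r),
    ← intervalIntegral.integral_of_le ha, integral_rpow (Or.inl hr),
    Real.zero_rpow (by linarith), sub_zero]

lemma lintegral_Ioi_rpow_of_lt {r a : ℝ} (hr : r < -1) (ha : 0 < a) :
    ∫⁻ t in Ioi a, ENNReal.ofReal (t ^ r) = ENNReal.ofReal (-a ^ (r + 1) / (r + 1)) := by
  rw [← ofReal_integral_eq_lintegral_ofReal (integrableOn_Ioi_rpow_of_lt hr ha)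
      (ae_restrict_of_forall_mem measurableSet_Ioi fun t ht =>
        Real.rpow_nonneg (ha.trans ht).le r),
    integral_Ioi_rpow_of_lt hr ha]

theorem lintegral_rpow_le_of_meas_lt_le {α : Type*} [MeasurableSpace α] {ν : Measure α}
    {f : α → ℝ} (hf0 : 0 ≤ᵐ[ν] f) (hf : AEMeasurable f ν) {ε δ a : ℝ} (hε : 0 < ε)
    (hεδ : ε < δ) (ha : 0 < a) {M B : ℝ≥0∞} (hM : ∀ t, ν {x | t < f x} ≤ M)
    (hB : ∀ t, 0 < t → ν {x | t < f x} ≤ B * ENNReal.ofReal (t ^ (-δ))) :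
    ∫⁻ x, ENNReal.ofReal (f x ^ ε) ∂ν ≤
      M * ENNReal.ofReal (a ^ ε) + B * ENNReal.ofReal (ε / (δ - ε) * a ^ (ε - δ)) := by
  have hlow : ∫⁻ t in Ioc 0 a, ν {x | t < f x} * ENNReal.ofReal (t ^ (ε - 1))
      ≤ M * ENNReal.ofReal (a ^ ε / ε) :=
    calc _ ≤ ∫⁻ t in Ioc 0 a, M * ENNReal.ofReal (t ^ (ε - 1)) :=
          setLIntegral_mono (by fun_prop) fun t _ => mul_le_mul_left (hM t) _
      _ = _ := by
          rw [lintegral_const_mul _ (by fun_prop), lintegral_Ioc_zero_rpow (by linarith) ha.le,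
            sub_add_cancel]
  have hhigh : ∫⁻ t in Ioi a, ν {x | t < f x} * ENNReal.ofReal (t ^ (ε - 1))
      ≤ B * ENNReal.ofReal (a ^ (ε - δ) / (δ - ε)) :=
    calc _ ≤ ∫⁻ t in Ioi a, B * ENNReal.ofReal (t ^ (ε - δ - 1)) := by
          refine setLIntegral_mono (by fun_prop) fun t ht => ?_
          have ht0 : 0 < t := ha.trans ht
          calc _ ≤ B * ENNReal.ofReal (t ^ (-δ)) * ENNReal.ofReal (t ^ (ε - 1)) :=
                mul_le_mul_left (hB t ht0) _
            _ = _ := by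
                rw [mul_assoc, ← ENNReal.ofReal_mul (Real.rpow_nonneg ht0.le _),
                  ← Real.rpow_add ht0]
                ring_nf
      _ = _ := by
          rw [lintegral_const_mul _ (by fun_prop), lintegral_Ioi_rpow_of_lt (by linarith) ha,
            sub_add_cancel, neg_div, ← div_neg, neg_sub]
  rw [lintegral_rpow_eq_lintegral_meas_lt_mul ν hf0 hf hε, ← Ioc_union_Ioi_eq_Ioi ha.le,
    lintegral_union measurableSet_Ioi (Ioc_disjoint_Ioi le_rfl)]
  calc _ ≤ ENNReal.ofReal ε * (M * ENNReal.ofReal (a ^ ε / ε)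
          + B * ENNReal.ofReal (a ^ (ε - δ) / (δ - ε))) := by gcongr
    _ = _ := by
      rw [mul_add, mul_left_comm, ← ENNReal.ofReal_mul hε.le, mul_div_cancel₀ _ hε.ne',
        mul_left_comm, ← ENNReal.ofReal_mul hε.le, mul_div_assoc', div_mul_eq_mul_div]

section ReverseHolder

variable {α : Type*} [MeasurableSpace α] {μ : Measure α} {w : α → ℝ} {Q : Set α} {c δ : ℝ}

lemma setLIntegral_superlevel_le (hw : Measurable w) (hQ : MeasurableSet Q) (hδ : 0 ≤ δ)
    (hA : ∀ E, MeasurableSet E → E ⊆ Q → ∫⁻ y in E, ENNReal.ofReal (w y) ∂μ ≤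
      ENNReal.ofReal c * (μ E / μ Q) ^ δ * ∫⁻ y in Q, ENNReal.ofReal (w y) ∂μ)
    {t : ℝ} (ht : 0 < t) :
    ∫⁻ y in {y | t < w y} ∩ Q, ENNReal.ofReal (w y) ∂μ ≤
      ENNReal.ofReal c * ((∫⁻ y in Q, ENNReal.ofReal (w y) ∂μ) / μ Q) ^ δ *
        (∫⁻ y in Q, ENNReal.ofReal (w y) ∂μ) * ENNReal.ofReal (t ^ (-δ)) := by
  set wQ := ∫⁻ y in Q, ENNReal.ofReal (w y) ∂μ
  set E := {y | t < w y} ∩ Q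
  have hE : MeasurableSet E := (measurableSet_lt measurable_const hw).inter hQ
  have hchebyshev : ENNReal.ofReal t * μ E ≤ wQ :=
    calc ENNReal.ofReal t * μ E = ∫⁻ _ in E, ENNReal.ofReal t ∂μ := (setLIntegral_const _ _).symm
      _ ≤ ∫⁻ y in E, ENNReal.ofReal (w y) ∂μ :=
          setLIntegral_mono hw.ennreal_ofReal fun y hy => ENNReal.ofReal_le_ofReal hy.1.le
      _ ≤ wQ := lintegral_mono_set inter_subset_right
  have hratio : μ E / μ Q ≤ wQ / μ Q / ENNReal.ofReal t := by
    rw [ENNReal.div_right_comm]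
    gcongr
    rw [ENNReal.le_div_iff_mul_le (Or.inl (ENNReal.ofReal_pos.2 ht).ne')
      (Or.inl ENNReal.ofReal_ne_top), mul_comm]
    exact hchebyshev
  calc _ ≤ ENNReal.ofReal c * (μ E / μ Q) ^ δ * wQ := hA E hE inter_subset_right
    _ ≤ ENNReal.ofReal c * (wQ / μ Q / ENNReal.ofReal t) ^ δ * wQ := by gcongr
    _ = _ := by
      rw [ENNReal.div_rpow_of_nonneg _ _ hδ, div_eq_mul_inv, ← ENNReal.rpow_neg,
        ENNReal.ofReal_rpow_of_pos ht]
      ring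

theorem setLIntegral_rpow_one_add_le (hw0 : ∀ x, 0 ≤ w x) (hw : Measurable w)
    (hQ : MeasurableSet Q) (hQT : μ Q ≠ ⊤) (hc : 0 ≤ c) {ε : ℝ} (hε : 0 < ε) (hεδ : ε < δ)
    (hA : ∀ E, MeasurableSet E → E ⊆ Q → ∫⁻ y in E, ENNReal.ofReal (w y) ∂μ ≤
      ENNReal.ofReal c * (μ E / μ Q) ^ δ * ∫⁻ y in Q, ENNReal.ofReal (w y) ∂μ) :
    ∫⁻ y in Q, ENNReal.ofReal (w y ^ (1 + ε)) ∂μ ≤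
      ENNReal.ofReal (1 + ε / (δ - ε) * c) *
        ((∫⁻ y in Q, ENNReal.ofReal (w y) ∂μ) / μ Q) ^ ε * ∫⁻ y in Q, ENNReal.ofReal (w y) ∂μ := by
  set wQ := ∫⁻ y in Q, ENNReal.ofReal (w y) ∂μ
  have hK : 0 < 1 + ε / (δ - ε) * c := by
    have : 0 ≤ ε / (δ - ε) * c := mul_nonneg (div_nonneg hε.le (by linarith)) hc
    linarith
  rcases eq_or_ne wQ 0 with h0 | h0
  · have hw_ae : ∀ᵐ y ∂μ.restrict Q, ENNReal.ofReal (w y) = 0 :=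
      (lintegral_eq_zero_iff hw.ennreal_ofReal).1 h0
    rw [lintegral_congr_ae (g := fun _ => 0) ?_, lintegral_zero]
    · exact zero_le
    filter_upwards [hw_ae] with y hy
    rw [ENNReal.ofReal_eq_zero] at hy ⊢
    rw [le_antisymm hy (hw0 y), Real.zero_rpow (by linarith)]
  rcases eq_or_ne wQ ⊤ with hT | hT
  · rw [hT, ENNReal.top_div_of_ne_top hQT, ENNReal.top_rpow_of_pos hε,
      ENNReal.mul_top (ENNReal.ofReal_pos.2 hK).ne', ENNReal.top_mul_top]
    exact le_top
  have hQ0 : μ Q ≠ 0 := fun h => h0 (by simp [wQ, Measure.restrict_eq_zero.2 h])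
  set A := wQ / μ Q
  have hA0 : A ≠ 0 := by simp [A, ENNReal.div_eq_zero_iff, h0, hQT]
  have hAT : A ≠ ⊤ := (ENNReal.div_lt_top hT hQ0).ne
  set a := A.toReal
  have ha : 0 < a := ENNReal.toReal_pos hA0 hAT
  have haA : A = ENNReal.ofReal a := (ENNReal.ofReal_toReal hAT).symm
  set ν := (μ.restrict Q).withDensity fun y => ENNReal.ofReal (w y)
  have hν : ∀ t : ℝ, ν {y | t < w y} = ∫⁻ y in {y | t < w y} ∩ Q, ENNReal.ofReal (w y) ∂μ :=
    fun t => by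
      rw [withDensity_apply _ (measurableSet_lt measurable_const hw),
        Measure.restrict_restrict (measurableSet_lt measurable_const hw)]
  have hlhs : ∫⁻ y in Q, ENNReal.ofReal (w y ^ (1 + ε)) ∂μ =
      ∫⁻ y, ENNReal.ofReal (w y ^ ε) ∂ν := by
    rw [lintegral_withDensity_eq_lintegral_mul _ hw.ennreal_ofReal
      (hw.pow_const _).ennreal_ofReal]
    refine lintegral_congr fun y => ?_
    rw [Pi.mul_apply, ← ENNReal.ofReal_mul (hw0 y), Real.rpow_add' (hw0 y) (by linarith),
      Real.rpow_one, mul_comm]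
  have htail := lintegral_rpow_le_of_meas_lt_le (ν := ν) (M := wQ)
    (B := ENNReal.ofReal c * A ^ δ * wQ) (Filter.Eventually.of_forall hw0) hw.aemeasurable
    hε hεδ ha (fun t => (hν t).trans_le (lintegral_mono_set inter_subset_right))
    (fun t ht => (hν t).trans_le
      (setLIntegral_superlevel_le hw hQ (hε.trans hεδ).le hA ht))
  have hpow : a ^ δ * a ^ (ε - δ) = a ^ ε := by rw [← Real.rpow_add ha]; ring_nf
  have hconst : ENNReal.ofReal (a ^ ε) + ENNReal.ofReal c * ENNReal.ofReal (a ^ δ) *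
      ENNReal.ofReal (ε / (δ - ε) * a ^ (ε - δ)) =
      ENNReal.ofReal (1 + ε / (δ - ε) * c) * ENNReal.ofReal (a ^ ε) := by
    rw [← ENNReal.ofReal_mul hc, ← ENNReal.ofReal_mul (by positivity),
      ← ENNReal.ofReal_add (by positivity) (by positivity), ← ENNReal.ofReal_mul hK.le]
    congr 1
    linear_combination (ε / (δ - ε) * c) * hpow
  rw [hlhs]
  refine htail.trans_eq ?_
  rw [haA, ENNReal.ofReal_rpow_of_pos ha, ENNReal.ofReal_rpow_of_pos ha, ← hconst]
  ring

end ReverseHolder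

lemma sigW_eq_rpow {n : ℕ} {v : (Fin n → ℝ) → ℝ} (hv : ∀ y, 0 ≤ v y) {p p' s : ℝ}
    (hp : p ≠ 1) (hexp : (p' - 1) * s = p - 1) :
    sigW v p' = fun y => sigW v p y ^ s := by
  have hs : s ≠ 0 := fun h => sub_ne_zero.2 hp (by rw [← hexp, h, mul_zero])
  funext y
  rw [sigW, sigW, ← Real.rpow_mul (hv y), ← hexp]
  congr 1
  field_simp

lemma volume_cube_ne_top {n : ℕ} (x : Fin n → ℝ) (l : ℝ) : volume (Cube x l) ≠ ⊤ :=
  (isCompact_closedBall x l).measure_lt_top.ne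

theorem AinfB.exists_reverse_holder {n : ℕ} {Ω : Set (Fin n → ℝ)} {β : ℝ}
    {w : (Fin n → ℝ) → ℝ} (h : AinfB Ω β w) (hw0 : ∀ x, 0 ≤ w x) (hw : Measurable w) :
    ∃ ε : ℝ, 0 < ε ∧ ∃ K : ℝ≥0∞, K ≠ ⊤ ∧ ∀ x l, MemF Ω β x l →
      wMeas (fun y => w y ^ (1 + ε)) (Cube x l) / volume (Cube x l) ≤
        K * (wMeas w (Cube x l) / volume (Cube x l)) ^ (1 + ε) := by
  obtain ⟨c, δ, hc, hδ, hA⟩ := h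
  refine ⟨δ / 2, half_pos hδ, ENNReal.ofReal (1 + c), ENNReal.ofReal_ne_top, fun x l hxl => ?_⟩
  have hRH := setLIntegral_rpow_one_add_le hw0 hw measurableSet_closedBall
    (volume_cube_ne_top x l) hc.le (half_pos hδ) (half_lt_self hδ) (hA x l hxl)
  rw [show δ / 2 / (δ - δ / 2) = 1 by field_simp; ring, one_mul] at hRH
  calc _ ≤ ENNReal.ofReal (1 + c) * (wMeas w (Cube x l) / volume (Cube x l)) ^ (δ / 2) *
        wMeas w (Cube x l) / volume (Cube x l) := by gcongr; exact hRH
    _ = _ := by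
      rw [ENNReal.rpow_add_of_nonneg _ _ zero_le_one (half_pos hδ).le, ENNReal.rpow_one,
        mul_div_assoc]
      ring

theorem Apq.of_sigW_avg_le {n : ℕ} {Ω : Set (Fin n → ℝ)} {β p q p' q' s : ℝ}
    {u v : (Fin n → ℝ) → ℝ} (h : Apq Ω β p q u v) (hv : ∀ y, 0 ≤ v y) (hp : p ≠ 1)
    (hp' : 1 ≤ p') (hexp : (p' - 1) * s = p - 1) (hpq : p' / q' = p / q) {K : ℝ≥0∞}
    (hK : K ≠ ⊤) (hσ : ∀ x l, MemF Ω β x l →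
      wMeas (fun y => sigW v p y ^ s) (Cube x l) / volume (Cube x l) ≤
        K * (wMeas (sigW v p) (Cube x l) / volume (Cube x l)) ^ s) :
    Apq Ω β p' q' u v := by
  obtain ⟨C, hC, hApq⟩ := h
  have hp'0 : 0 ≤ p' - 1 := by linarith
  refine ⟨K ^ (p' - 1) * C, ENNReal.mul_ne_top (ENNReal.rpow_ne_top_of_nonneg hp'0 hK) hC,
    fun x l hxl => ?_⟩
  rw [hpq, sigW_eq_rpow hv hp hexp]
  calc _ ≤ (wMeas u (Cube x l) / volume (Cube x l)) ^ (p / q) *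
        (K * (wMeas (sigW v p) (Cube x l) / volume (Cube x l)) ^ s) ^ (p' - 1) := by
        gcongr; exact hσ x l hxl
    _ = K ^ (p' - 1) * ((wMeas u (Cube x l) / volume (Cube x l)) ^ (p / q) *
        (wMeas (sigW v p) (Cube x l) / volume (Cube x l)) ^ (p - 1)) := by
        rw [ENNReal.mul_rpow_of_nonneg _ _ hp'0, ← ENNReal.rpow_mul, mul_comm s, hexp]
        ring
    _ ≤ K ^ (p' - 1) * C := by gcongr; exact hApq x l hxl

theorem Apq_openness_general {n : ℕ} (Ω : Set (Fin n → ℝ))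
    (p q β : ℝ) (hp : 1 < p) (hpq : p ≤ q)
    (u v : (Fin n → ℝ) → ℝ) (hv : IsWeight Ω v)
    (hApq : Apq Ω β p q u v) (hσA : AinfB Ω β (sigW v p)) :
    ∃ δ : ℝ, 0 < δ ∧ 1 < p - δ ∧ p - δ < p ∧ ((p - δ) / p) * q < q ∧
      p - δ ≤ ((p - δ) / p) * q ∧
      p / q = (p - δ) / (((p - δ) / p) * q) ∧
      Apq Ω β (p - δ) (((p - δ) / p) * q) u v := by
  obtain ⟨hv0, hvm, -⟩ := hv
  obtain ⟨ε, hε, K, hK, hRH⟩ :=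
    hσA.exists_reverse_holder (fun y => Real.rpow_nonneg (hv0 y) _) (hvm.pow_const _)
  set δ := (p - 1) * ε / (1 + ε)
  have hδ : 0 < δ := by positivity
  have hexp : (p - δ - 1) * (1 + ε) = p - 1 := by
    simp only [δ]
    field_simp
    ring
  have hpδ : 1 < p - δ := by nlinarith
  have hratio : (p - δ) / ((p - δ) / p * q) = p / q := by field_simp
  have hq : 0 < q := by linarith
  refine ⟨δ, hδ, hpδ, by linarith, ?_, ?_, hratio.symm,
    hApq.of_sigW_avg_le hv0 hp.ne' hpδ.le hexp hratio hK hRH⟩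
  · have : (p - δ) / p < 1 := (div_lt_one (by linarith)).2 (by linarith)
    nlinarith
  · rw [div_mul_eq_mul_div, le_div_iff₀ (by linarith)]
    nlinarith

/-- Lemma 4.3: if `(u,v) ∈ A_{p,q}^β` and
`σ = v^{-1/(p-1)} ∈ A_∞^β`, then there is `δ > 0` such that, with
`p̃ = p - δ` and `q̃ = ((p-δ)/p)q`, one has `1 < p̃ < p`, `q̃ < q`,
`p̃ ≤ q̃`, `p/q = p̃/q̃` and `(u,v) ∈ A_{p̃,q̃}^β`. -/
theorem Apq_openness {n : ℕ} (Ω : Set (Fin n → ℝ))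
    (hΩo : IsOpen Ω) (hΩne : Ω.Nonempty) (hΩpr : Ω ≠ Set.univ)
    (p q β : ℝ) (hp : 1 < p) (hpq : p ≤ q) (hβ0 : 0 < β) (hβ1 : β < 1)
    (u v : (Fin n → ℝ) → ℝ) (hu : IsWeight Ω u) (hv : IsWeight Ω v)
    (hApq : Apq Ω β p q u v) (hσA : AinfB Ω β (sigW v p)) :
    ∃ δ : ℝ, 0 < δ ∧ 1 < p - δ ∧ p - δ < p ∧ ((p - δ) / p) * q < q ∧
      p - δ ≤ ((p - δ) / p) * q ∧
      p / q = (p - δ) / (((p - δ) / p) * q) ∧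
      Apq Ω β (p - δ) (((p - δ) / p) * q) u v :=
  Apq_openness_general Ω p q β hp hpq u v hv hApq hσA
end
end

section
/- Let 0 < α < 1/4 and set γ = 2α/(1 − α), so that 0 < γ < 1. Then for every locally integrable function f and every x in Ω, M_α f(x) ≤ 2^n · M_γ^c f(x), where M_α is the (uncentered) local maximal function over F_α and M_γ^c is the centered local maximal function over F_γ. -/
open MeasureTheory Metric Set
open scoped ENNReal

noncomputable section

/-- Lemma 4.4: for `0 < α < 1/4` and `γ = 2α/(1-α)` one has
`0 < γ < 1` and `M_α f(x) ≤ 2^n M_γ^c f(x)` for every locally integrable `f`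
and every `x ∈ Ω`. -/
theorem locMax_le_centered {n : ℕ} (Ω : Set (Fin n → ℝ))
    (hΩo : IsOpen Ω) (hΩne : Ω.Nonempty) (hΩpr : Ω ≠ Set.univ)
    (α : ℝ) (hα0 : 0 < α) (hα4 : α < 1 / 4) :
    0 < 2 * α / (1 - α) ∧ 2 * α / (1 - α) < 1 ∧
      ∀ f : (Fin n → ℝ) → ℝ, LocallyIntegrableOn f Ω →
        ∀ x ∈ Ω, locMax Ω α f x ≤ 2 ^ n * locMaxC Ω (2 * α / (1 - α)) f x := by
  have h1α : (0:ℝ) < 1 - α := by linarith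
  refine ⟨div_pos (by linarith) h1α, (div_lt_one h1α).mpr (by linarith), ?_⟩
  intro f hf x hx
  rw [locMax]
  refine iSup_le fun c => iSup_le fun l => iSup_le fun hmem => iSup_le fun hxQ => ?_
  obtain ⟨hcΩ, hl0, hlα⟩ := hmem
  have hdist : dist x c ≤ l := Metric.mem_closedBall.mp hxQ
  -- the enlarged centered cube is in F_γ
  have hDc : l / α < Metric.infDist c Ωᶜ := by
    rw [div_lt_iff₀ hα0]; nlinarith [hlα]
  have hDx : Metric.infDist c Ωᶜ - l ≤ Metric.infDist x Ωᶜ := by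
    have := Metric.infDist_le_infDist_add_dist (x := c) (y := x) (s := Ωᶜ)
    have hd : dist c x ≤ l := by rwa [dist_comm]
    linarith
  have hmem2 : MemF Ω (2 * α / (1 - α)) x (2 * l) := by
    refine ⟨hx, by linarith, ?_⟩
    rw [div_mul_eq_mul_div, lt_div_iff₀ h1α]
    have h1 : l / α ≤ Metric.infDist x Ωᶜ + l := by linarith
    rw [div_le_iff₀ hα0] at h1
    nlinarith
  -- subset and volume relations
  have hsub : Cube c l ⊆ Cube x (2 * l) := by
    apply Metric.closedBall_subset_closedBall'
    rw [dist_comm] at hdist; linarith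
  have hvc : volume (Cube c l) = ENNReal.ofReal ((2 * l) ^ n) := by
    rw [Cube, Real.volume_pi_closedBall c hl0.le, Fintype.card_fin]
  have hvx : volume (Cube x (2 * l)) = 2 ^ n * ENNReal.ofReal ((2 * l) ^ n) := by
    rw [Cube, Real.volume_pi_closedBall x (by linarith), Fintype.card_fin]
    have : (2 * (2 * l)) ^ n = 2 ^ n * (2 * l) ^ n := mul_pow 2 (2 * l) n
    rw [this, ENNReal.ofReal_mul (by positivity), ENNReal.ofReal_pow (by norm_num),
      ENNReal.ofReal_ofNat]
  have key : avgI f (Cube c l) ≤ 2 ^ n * avgI f (Cube x (2 * l)) := by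
    rw [avgI, avgI, hvc, hvx]
    have hI : (∫⁻ y in Cube c l, ENNReal.ofReal |f y|) ≤
        ∫⁻ y in Cube x (2 * l), ENNReal.ofReal |f y| :=
      lintegral_mono_set hsub
    have h2n : ((2:ℝ≥0∞) ^ n) ≠ 0 := by positivity
    have h2nt : ((2:ℝ≥0∞) ^ n) ≠ ⊤ := by
      exact ENNReal.pow_ne_top (by norm_num)
    rw [ENNReal.mul_inv (Or.inl h2n) (Or.inl h2nt), ← mul_assoc, ← mul_assoc,
      ENNReal.mul_inv_cancel h2n h2nt, one_mul]
    exact mul_le_mul_right hI _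
  refine key.trans (mul_le_mul_right ?_ _)
  exact le_iSup_of_le (2 * l) (le_iSup_of_le hmem2 le_rfl)
end
end
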